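/- Consider the 3-dimensional Lie algebra with basis ξ, E1, E2 and brackets [E1,E2]=0, [ξ,E1]=−(μ/2)E1+εE2, [ξ,E2]=−εκE1+(μ/2)E2 with ε=±1 and pseudo-metric g(ξ,ξ)=1, g(E1,E2)=1 (other basis products zero). Then the Levi-Civita connection satisfies ∇_ξξ=0, ∇_ξE1=−(μ/2)E1, ∇_ξE2=(μ/2)E2, ∇_{E1}ξ=−εE2, ∇_{E1}E1=εξ, ∇_{E1}E2=0, ∇_{E2}ξ=εκE1, ∇_{E2}E1=0, ∇_{E2}E2=−εκξ, and the curvature satisfies R(X,Y)ξ = κ(η(Y)X−η(X)Y) + μ(η(Y)hX−η(X)hY), where hξ=0, hE1=εE2, hE2=εκE1. -/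

import Mathlib

/-! Since `ip` is nondegenerate, the Koszul formula determines `∇` uniquely, and the explicit
bilinear map `leviCivita` satisfies it. The curvature identity is then a polynomial identity
in the coordinates, holding modulo `ε² = 1`. -/

noncomputable section

def ξ : Fin 3 → ℝ := ![1, 0, 0]
def E1 : Fin 3 → ℝ := ![0, 1, 0]
def E2 : Fin 3 → ℝ := ![0, 0, 1]

/-- Artin (pseudo-Riemannian) metric: g(ξ,ξ) = 1, g(E1,E2) = 1, other products zero. -/
def ip (x y : Fin 3 → ℝ) : ℝ := x 0 * y 0 + x 1 * y 2 + x 2 * y 1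

/-- Bracket [E1,E2] = 0, [ξ,E1] = −(μ/2)E1 + εE2, [ξ,E2] = −εκE1 + (μ/2)E2. -/
def br (κ μ ε : ℝ) (x y : Fin 3 → ℝ) : Fin 3 → ℝ :=
  (x 0 * y 1 - x 1 * y 0) • ![0, -(μ / 2), ε] +
  (x 0 * y 2 - x 2 * y 0) • ![0, -(ε * κ), μ / 2]

/-- η dual to ξ. -/
def η (x : Fin 3 → ℝ) : ℝ := x 0

/-- h: hξ = 0, hE1 = εE2, hE2 = εκE1. -/
def h (κ ε : ℝ) (x : Fin 3 → ℝ) : Fin 3 → ℝ := ![0, ε * κ * x 2, ε * x 1]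

def leviCivita (κ μ ε : ℝ) (x y : Fin 3 → ℝ) : Fin 3 → ℝ :=
  ![ε * x 1 * y 1 - ε * κ * x 2 * y 2,
    -(μ / 2) * x 0 * y 1 + ε * κ * x 2 * y 0,
    -ε * x 1 * y 0 + μ / 2 * x 0 * y 2]

theorem eq_of_forall_ip_eq {u v : Fin 3 → ℝ} (huv : ∀ z, ip u z = ip v z) : u = v := by
  funext i
  fin_cases i
  · simpa [ip, ξ] using huv ξ
  · simpa [ip, E2] using huv E2
  · simpa [ip, E1] using huv E1

theorem two_mul_ip_leviCivita (κ μ ε : ℝ) (x y z : Fin 3 → ℝ) :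
    2 * ip (leviCivita κ μ ε x y) z =
      ip (br κ μ ε x y) z - ip (br κ μ ε y z) x + ip (br κ μ ε z x) y := by
  simp only [ip, br, leviCivita, Pi.add_apply, Pi.smul_apply, smul_eq_mul, Matrix.cons_val_zero,
    Matrix.cons_val_one, Matrix.cons_val_two, Matrix.head_cons, Matrix.tail_cons]
  ring

theorem eq_leviCivita_of_koszul (κ μ ε : ℝ)
    (nabla : (Fin 3 → ℝ) → (Fin 3 → ℝ) → (Fin 3 → ℝ))
    (hK : ∀ X Y Z, 2 * ip (nabla X Y) Z =
      ip (br κ μ ε X Y) Z - ip (br κ μ ε Y Z) X + ip (br κ μ ε Z X) Y) :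
    nabla = leviCivita κ μ ε := by
  funext X Y
  refine eq_of_forall_ip_eq fun Z => ?_
  linarith [hK X Y Z, two_mul_ip_leviCivita κ μ ε X Y Z]

theorem leviCivita_basis (κ μ ε : ℝ) :
    leviCivita κ μ ε ξ ξ = 0 ∧
    leviCivita κ μ ε ξ E1 = -(μ / 2) • E1 ∧
    leviCivita κ μ ε ξ E2 = (μ / 2) • E2 ∧
    leviCivita κ μ ε E1 ξ = -ε • E2 ∧
    leviCivita κ μ ε E1 E1 = ε • ξ ∧
    leviCivita κ μ ε E1 E2 = 0 ∧
    leviCivita κ μ ε E2 ξ = (ε * κ) • E1 ∧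
    leviCivita κ μ ε E2 E1 = 0 ∧
    leviCivita κ μ ε E2 E2 = -(ε * κ) • ξ := by
  refine ⟨?_, ?_, ?_, ?_, ?_, ?_, ?_, ?_, ?_⟩ <;>
    funext i <;> fin_cases i <;> simp [leviCivita, ξ, E1, E2]

theorem leviCivita_curvature_ξ (κ μ ε : ℝ) (hε : ε * ε = 1) (X Y : Fin 3 → ℝ) :
    leviCivita κ μ ε X (leviCivita κ μ ε Y ξ) - leviCivita κ μ ε Y (leviCivita κ μ ε X ξ)
        - leviCivita κ μ ε (br κ μ ε X Y) ξ =
      κ • (η Y • X - η X • Y) + μ • (η Y • h κ ε X - η X • h κ ε Y) := by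
  funext i
  fin_cases i <;>
    simp only [leviCivita, br, ξ, η, h, Fin.zero_eta, Fin.mk_one, Fin.reduceFinMk, Pi.add_apply,
      Pi.sub_apply, Pi.smul_apply, smul_eq_mul, Matrix.cons_val_zero, Matrix.cons_val_one,
      Matrix.cons_val_two, Matrix.head_cons, Matrix.tail_cons]
  · ring
  · linear_combination (-κ * (X 0 * Y 1 - X 1 * Y 0)) * hε
  · linear_combination (-κ * (X 0 * Y 2 - X 2 * Y 0)) * hε

/-- The model Lie algebra of three-dimensional almost paracosymplectic (κ,μ)-spaces:
the Levi-Civita connection has the stated coefficients and the curvature satisfies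
R(X,Y)ξ = κ(η(Y)X − η(X)Y) + μ(η(Y)hX − η(X)hY). -/
theorem paracosymplectic_model (κ μ ε : ℝ) (hε : ε = 1 ∨ ε = -1)
    (nabla : (Fin 3 → ℝ) → (Fin 3 → ℝ) → (Fin 3 → ℝ))
    (hK : ∀ X Y Z, 2 * ip (nabla X Y) Z =
      ip (br κ μ ε X Y) Z - ip (br κ μ ε Y Z) X + ip (br κ μ ε Z X) Y)
    (R : (Fin 3 → ℝ) → (Fin 3 → ℝ) → (Fin 3 → ℝ) → (Fin 3 → ℝ))
    (hR : ∀ X Y Z, R X Y Z =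
      nabla X (nabla Y Z) - nabla Y (nabla X Z) - nabla (br κ μ ε X Y) Z) :
    (nabla ξ ξ = 0 ∧
     nabla ξ E1 = -(μ / 2) • E1 ∧
     nabla ξ E2 = (μ / 2) • E2 ∧
     nabla E1 ξ = -ε • E2 ∧
     nabla E1 E1 = ε • ξ ∧
     nabla E1 E2 = 0 ∧
     nabla E2 ξ = (ε * κ) • E1 ∧
     nabla E2 E1 = 0 ∧
     nabla E2 E2 = -(ε * κ) • ξ) ∧
    (∀ X Y, R X Y ξ =
      κ • (η Y • X - η X • Y) + μ • (η Y • h κ ε X - η X • h κ ε Y)) := by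
  obtain rfl := eq_leviCivita_of_koszul κ μ ε nabla hK
  have hε2 : ε * ε = 1 := by rcases hε with rfl | rfl <;> norm_num
  refine ⟨leviCivita_basis κ μ ε, fun X Y => ?_⟩
  rw [hR]
  exact leviCivita_curvature_ξ κ μ ε hε2 X Y
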